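/- arXiv:2106.06326 — 2 statements merged into one kernel-verified Lean document; each statement's English description precedes it below -/
import Mathlib

section
/- Let H be a hypothesis class of measurable functions X → {0,1}, P_M and P_T probability distributions over X, and f_M, f_T : X → {0,1} the labeling functions of the intermediate and target domains. Let h*_S ∈ H be any fixed hypothesis, h* := argmin_{h∈H} [ε_M(h) + ε_T(h)] (assumed to exist), and λ := ε_M(h*) + ε_T(h*). Then for every h ∈ H: ε_T(h) ≤ ε_M(h, h*_S) + d_{H△H}(P_M, P_T) + ε_M(h*_S) + λ, where ε_M(h) := ε_{P_M}(h, f_M), ε_T(h) := ε_{P_T}(h, f_T), ε_M(h,h') := E_{x~P_M}[|h(x)−h'(x)|], and d_{H△H} is the symmetric difference hypothesis divergence. -/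
open MeasureTheory

/- For {0,1}-valued hypotheses the error `ε_D(f, g)` is the probability of the disagreement set
`{f ≠ g}`, so it satisfies the triangle inequality, and on pairs from `H` it moves by at most
`d_{H△H}/2` when `P_M` is replaced by `P_T`. Hence
`ε_T(h) ≤ ε_T(h, h*) + ε_T(h*) ≤ ε_M(h, h*) + d/2 + ε_T(h*)
  ≤ ε_M(h, h*_S) + ε_M(h*_S) + ε_M(h*) + d + ε_T(h*)`. -/

/-- Expected disagreement `ε_D(f,g) = E_{x~D} |f(x) - g(x)|`. -/
noncomputable def eps {X : Type*} [MeasurableSpace X] (D : Measure X)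
    (f g : X → ℝ) : ℝ :=
  ∫ x, |f x - g x| ∂D

/-- Symmetric difference hypothesis divergence for a class of real-valued
(binary) hypotheses. -/
noncomputable def dHdH {X : Type*} [MeasurableSpace X] (H : Set (X → ℝ))
    (P Q : Measure X) : ℝ :=
  2 * sSup {r : ℝ | ∃ h ∈ H, ∃ h' ∈ H,
    r = |(P {x | h x ≠ h' x}).toReal - (Q {x | h x ≠ h' x}).toReal|}

section Binary

variable {X : Type*} {f g k : X → ℝ}

lemma abs_sub_eq_indicator_ne (hf : ∀ x, f x = 0 ∨ f x = 1) (hg : ∀ x, g x = 0 ∨ g x = 1)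
    (x : X) : |f x - g x| = Set.indicator {x | f x ≠ g x} 1 x := by
  by_cases hx : f x = g x
  · simp [hx]
  · rcases hf x with h | h <;> rcases hg x with h' | h' <;> simp_all

variable [MeasurableSpace X]

lemma eps_eq_measureReal_ne (D : Measure X) (hmf : Measurable f) (hmg : Measurable g)
    (hf : ∀ x, f x = 0 ∨ f x = 1) (hg : ∀ x, g x = 0 ∨ g x = 1) :
    eps D f g = D.real {x | f x ≠ g x} := by
  simp only [eps, abs_sub_eq_indicator_ne hf hg]
  exact integral_indicator_one (measurableSet_eq_fun hmf hmg).compl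

lemma eps_comm (D : Measure X) (f g : X → ℝ) : eps D f g = eps D g f := by
  simp only [eps, abs_sub_comm]

lemma measureReal_ne_le_add (D : Measure X) [IsFiniteMeasure D] (f g k : X → ℝ) :
    D.real {x | f x ≠ g x} ≤ D.real {x | f x ≠ k x} + D.real {x | k x ≠ g x} := by
  have hsub : {x | f x ≠ g x} ⊆ {x | f x ≠ k x} ∪ {x | k x ≠ g x} := by
    intro x hx
    by_contra! hfk
    simp_all
  exact (measureReal_mono hsub).trans (measureReal_union_le _ _)

lemma eps_le_add (D : Measure X) [IsFiniteMeasure D]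
    (hmf : Measurable f) (hmg : Measurable g) (hmk : Measurable k)
    (hf : ∀ x, f x = 0 ∨ f x = 1) (hg : ∀ x, g x = 0 ∨ g x = 1)
    (hk : ∀ x, k x = 0 ∨ k x = 1) :
    eps D f g ≤ eps D f k + eps D k g := by
  rw [eps_eq_measureReal_ne D hmf hmg hf hg, eps_eq_measureReal_ne D hmf hmk hf hk,
    eps_eq_measureReal_ne D hmk hmg hk hg]
  exact measureReal_ne_le_add D f g k

end Binary

section Divergence

variable {X : Type*} [MeasurableSpace X] (H : Set (X → ℝ)) (P Q : Measure X)

lemma dHdH_nonneg : 0 ≤ dHdH H P Q := by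
  refine mul_nonneg zero_le_two (Real.sSup_nonneg ?_)
  rintro r ⟨h, -, h', -, rfl⟩
  exact abs_nonneg _

lemma bddAbove_dHdH_set [IsFiniteMeasure P] [IsFiniteMeasure Q] :
    BddAbove {r : ℝ | ∃ h ∈ H, ∃ h' ∈ H,
      r = |(P {x | h x ≠ h' x}).toReal - (Q {x | h x ≠ h' x}).toReal|} := by
  refine ⟨P.real Set.univ + Q.real Set.univ, ?_⟩
  rintro r ⟨h, -, h', -, rfl⟩
  change |P.real {x | h x ≠ h' x} - Q.real {x | h x ≠ h' x}| ≤ _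
  have hP : P.real {x | h x ≠ h' x} ≤ P.real Set.univ := measureReal_mono (Set.subset_univ _)
  have hQ : Q.real {x | h x ≠ h' x} ≤ Q.real Set.univ := measureReal_mono (Set.subset_univ _)
  rw [abs_sub_le_iff]
  constructor <;> linarith [measureReal_nonneg (μ := P) (s := {x | h x ≠ h' x}),
    measureReal_nonneg (μ := Q) (s := {x | h x ≠ h' x})]

lemma measureReal_ne_le_add_dHdH [IsFiniteMeasure P] [IsFiniteMeasure Q]
    {h h' : X → ℝ} (hh : h ∈ H) (hh' : h' ∈ H) :
    Q.real {x | h x ≠ h' x} ≤ P.real {x | h x ≠ h' x} + dHdH H P Q / 2 := by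
  have hle : |P.real {x | h x ≠ h' x} - Q.real {x | h x ≠ h' x}| ≤ dHdH H P Q / 2 := by
    rw [dHdH, mul_div_cancel_left₀ _ two_ne_zero]
    exact le_csSup (bddAbove_dHdH_set H P Q) ⟨h, hh, h', hh', rfl⟩
  linarith [neg_abs_le (P.real {x | h x ≠ h' x} - Q.real {x | h x ≠ h' x})]

end Divergence

theorem stmt_2_general {X : Type*} [MeasurableSpace X]
    (P_M P_T : Measure X) [IsProbabilityMeasure P_M] [IsProbabilityMeasure P_T]
    (H : Set (X → ℝ)) (f_M f_T : X → ℝ)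
    (hmeasH : ∀ h ∈ H, Measurable h)
    (hbinH : ∀ h ∈ H, ∀ x, h x = 0 ∨ h x = 1)
    (hmM : Measurable f_M) (hmT : Measurable f_T)
    (hbM : ∀ x, f_M x = 0 ∨ f_M x = 1) (hbT : ∀ x, f_T x = 0 ∨ f_T x = 1)
    (hS hstar : X → ℝ) (hhS : hS ∈ H) (hhstar : hstar ∈ H) :
    ∀ h ∈ H, eps P_T h f_T ≤
      eps P_M h hS + dHdH H P_M P_T + eps P_M hS f_M +
        (eps P_M hstar f_M + eps P_T hstar f_T) := by
  intro h hh
  have hmh := hmeasH h hh; have hmS := hmeasH hS hhS; have hm := hmeasH hstar hhstar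
  have hbh := hbinH h hh; have hbS := hbinH hS hhS; have hb := hbinH hstar hhstar
  have target := eps_le_add P_T hmh hmT hm hbh hbT hb
  have shift : eps P_T h hstar ≤ eps P_M h hstar + dHdH H P_M P_T / 2 := by
    rw [eps_eq_measureReal_ne P_T hmh hm hbh hb, eps_eq_measureReal_ne P_M hmh hm hbh hb]
    exact measureReal_ne_le_add_dHdH H P_M P_T hh hhstar
  have via_hS := eps_le_add P_M hmh hm hmS hbh hb hbS
  have via_fM := eps_le_add P_M hmS hm hmM hbS hb hbM
  rw [eps_comm P_M f_M] at via_fM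
  linarith [dHdH_nonneg H P_M P_T]

theorem stmt_2 {X : Type*} [MeasurableSpace X]
    (P_M P_T : Measure X) [IsProbabilityMeasure P_M] [IsProbabilityMeasure P_T]
    (H : Set (X → ℝ)) (f_M f_T : X → ℝ)
    (hmeasH : ∀ h ∈ H, Measurable h)
    (hbinH : ∀ h ∈ H, ∀ x, h x = 0 ∨ h x = 1)
    (hmM : Measurable f_M) (hmT : Measurable f_T)
    (hbM : ∀ x, f_M x = 0 ∨ f_M x = 1) (hbT : ∀ x, f_T x = 0 ∨ f_T x = 1)
    (hS hstar : X → ℝ) (hhS : hS ∈ H) (hhstar : hstar ∈ H)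
    (hmin : ∀ g ∈ H, eps P_M hstar f_M + eps P_T hstar f_T ≤
      eps P_M g f_M + eps P_T g f_T) :
    ∀ h ∈ H, eps P_T h f_T ≤
      eps P_M h hS + dHdH H P_M P_T + eps P_M hS f_M +
        (eps P_M hstar f_M + eps P_T hstar f_T) :=
  stmt_2_general P_M P_T H f_M f_T hmeasH hbinH hmM hmT hbM hbT hS hstar hhS hhstar
end

section
/- Finite-class version of semi-supervised learnability: let H be a finite hypothesis class with c* ∈ H, and χ : H × X → [0,1] a compatibility function with χ(c*,P) ≥ 1 − t. Suppose we draw m_u ≥ (1/(2ε²))·ln(2|H|/δ') unlabeled samples S (so that with probability 1−δ', all h ∈ H satisfy |χ(h,P) − χ̂(h,S)| ≤ ε), and m_l ≥ (1/ε)·ln(|H_{t+2ε}|/δ'') labeled samples, where H_{t+2ε} := {h ∈ H : χ(h,P) ≥ 1 − t − 2ε}. Then with probability at least 1 − δ' − δ'', every h ∈ H with zero empirical labeled error and empirical compatibility χ̂(h,S) ≥ 1 − t − ε satisfies err(h) ≤ ε. -/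
open MeasureTheory
open scoped Classical

/-- True error of `h` with respect to target `cstar` under `P`. -/
noncomputable def err {X : Type*} [MeasurableSpace X] (P : Measure X)
    (h cstar : X → Bool) : ℝ :=
  (P {x | h x ≠ cstar x}).toReal

/-- Expected compatibility `χ(h,P) = E_{x~P} χ(h,x)`. -/
noncomputable def chiP {X : Type*} [MeasurableSpace X] (χ : (X → Bool) → X → ℝ)
    (P : Measure X) (h : X → Bool) : ℝ :=
  ∫ x, χ h x ∂P

/-- Empirical compatibility `χ̂(h,S)` over an unlabeled sample of size `m`. -/
noncomputable def chiHat {X : Type*} (χ : (X → Bool) → X → ℝ) (m : ℕ)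
    (s : Fin m → X) (h : X → Bool) : ℝ :=
  (1 / (m : ℝ)) * ∑ i, χ h (s i)

/-!
Two events carry all the failure probability. First, some `h ∈ H` may have empirical
compatibility exceeding its true compatibility by `ε`; by Hoeffding's inequality and a union bound
this has probability at most `|H| e^{-2 m_u ε²} ≤ δ'`. Off this event, `χ̂(h,S) ≥ 1 - t - ε`
forces `χ(h,P) ≥ 1 - t - 2ε`, so only hypotheses in `H_{t+2ε}` can pass the compatibility test.
Second, some `h ∈ H_{t+2ε}` with `err h > ε` may agree with `c*` on all labeled points; each does
so with probability `(1 - ε)^{m_l} ≤ e^{-ε m_l}`, so this has probability at most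
`|H_{t+2ε}| e^{-ε m_l} ≤ δ''`.
-/

open Real ProbabilityTheory Set

section Sampling

variable {X : Type*} [MeasurableSpace X] (P : Measure X) [IsProbabilityMeasure P]

theorem measureReal_pi_mul_integral_add_le_sum_le {f : X → ℝ} (hf : Measurable f)
    (hf01 : ∀ x, f x ∈ Icc (0 : ℝ) 1) (n : ℕ) {ε : ℝ} (hε : 0 ≤ ε) :
    (Measure.pi fun _ : Fin n => P).real
        {ω | n * (∫ x, f x ∂P + ε) ≤ ∑ i, f (ω i)} ≤ exp (-(2 * ε ^ 2 * n)) := by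
  have hsubG : HasSubgaussianMGF (fun x => f x - P[f]) ((‖(1 : ℝ) - 0‖₊ / 2) ^ 2) P :=
    hasSubgaussianMGF_of_mem_Icc hf.aemeasurable (ae_of_all _ hf01)
  have hsubG_eval (i : Fin n) : HasSubgaussianMGF (fun ω : Fin n → X => f (ω i) - P[f])
      ((‖(1 : ℝ) - 0‖₊ / 2) ^ 2) (Measure.pi fun _ => P) :=
    HasSubgaussianMGF.of_map (measurable_pi_apply i).aemeasurable
      (by rwa [(measurePreserving_eval (fun _ : Fin n => P) i).map_eq])
  have hindep : iIndepFun (fun i (ω : Fin n → X) => f (ω i) - P[f]) (Measure.pi fun _ => P) :=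
    iIndepFun_pi fun _ => (hf.sub_const _).aemeasurable
  have hoeffding := HasSubgaussianMGF.measure_sum_ge_le_of_iIndepFun hindep (s := Finset.univ)
    (fun i _ => hsubG_eval i) (ε := n * ε) (by positivity)
  have hset : {ω : Fin n → X | n * (∫ x, f x ∂P + ε) ≤ ∑ i, f (ω i)}
      = {ω | n * ε ≤ ∑ i, (f (ω i) - P[f])} := by
    ext ω
    simp only [mem_ofPred_eq, Finset.sum_sub_distrib, Finset.sum_const, Finset.card_univ,
      Fintype.card_fin, nsmul_eq_mul]
    constructor <;> intro h <;> linarith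
  rw [hset]
  refine hoeffding.trans_eq (congrArg exp ?_)
  simp only [Finset.sum_const, Finset.card_univ, Fintype.card_fin, nsmul_eq_mul]
  rcases n.eq_zero_or_pos with rfl | hn
  · simp
  · norm_num
    field_simp
    ring

theorem measureReal_pi_forall_eq_le {h c : X → Bool} (hh : Measurable h) (hc : Measurable c)
    (n : ℕ) {ε : ℝ} (herr : ε ≤ err P h c) :
    (Measure.pi fun _ : Fin n => P).real {ω | ∀ i, h (ω i) = c (ω i)} ≤ exp (-(ε * n)) := by
  set A : Set X := {x | h x = c x}
  have hA : MeasurableSet A := measurableSet_eq_fun hh hc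
  have hPA : P.real A ≤ 1 - ε := by
    have hcompl : P.real Aᶜ = 1 - P.real A := probReal_compl_eq_one_sub hA
    have herr_eq : err P h c = P.real Aᶜ := rfl
    linarith
  have hpi : {ω : Fin n → X | ∀ i, h (ω i) = c (ω i)} = Set.pi univ fun _ => A := by
    ext ω; simp [A]
  calc (Measure.pi fun _ : Fin n => P).real {ω | ∀ i, h (ω i) = c (ω i)}
      = P.real A ^ n := by
        rw [hpi, measureReal_def, Measure.pi_pi, Finset.prod_const, Finset.card_univ,
          Fintype.card_fin, ENNReal.toReal_pow, measureReal_def]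
    _ ≤ exp (-ε) ^ n :=
        pow_le_pow_left₀ measureReal_nonneg (hPA.trans (by linarith [add_one_le_exp (-ε)])) n
    _ = exp (-(ε * n)) := by rw [← exp_nat_mul]; ring_nf

end Sampling

theorem measureReal_exists_le_card_mul {Ω ι : Type*} [MeasurableSpace Ω] {μ : Measure Ω}
    [IsFiniteMeasure μ] (s : Finset ι) (p : ι → Ω → Prop) {b : ℝ}
    (hb : ∀ i ∈ s, μ.real {ω | p i ω} ≤ b) :
    μ.real {ω | ∃ i ∈ s, p i ω} ≤ s.card * b := by
  have hunion : {ω | ∃ i ∈ s, p i ω} = ⋃ i ∈ s, {ω | p i ω} := by ext; simp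
  calc μ.real {ω | ∃ i ∈ s, p i ω} ≤ ∑ i ∈ s, μ.real {ω | p i ω} := by
        rw [hunion]; exact measureReal_biUnion_finset_le s _
    _ ≤ s.card * b := by simpa using Finset.sum_le_card_nsmul s _ b hb

theorem one_sub_sub_le_measureReal {Ω : Type*} [MeasurableSpace Ω] {μ : Measure Ω}
    [IsProbabilityMeasure μ] {E A B : Set Ω} (hsub : Eᶜ ⊆ A ∪ B) {a b : ℝ}
    (ha : μ.real A ≤ a) (hb : μ.real B ≤ b) :
    1 - a - b ≤ μ.real E := by
  have hcover : μ.real univ ≤ μ.real E + (μ.real A + μ.real B) := calc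
    μ.real univ = μ.real (E ∪ Eᶜ) := by rw [union_compl_self]
    _ ≤ μ.real E + μ.real (A ∪ B) :=
        (measureReal_union_le _ _).trans (by gcongr; finiteness)
    _ ≤ μ.real E + (μ.real A + μ.real B) := by gcongr; exact measureReal_union_le _ _
  rw [probReal_univ] at hcover
  linarith

theorem mul_exp_neg_le_of_one_div_mul_log_le {N δ c m : ℝ} (hc : 0 < c) (hδ : 0 < δ)
    (h : 1 / c * log (N / δ) ≤ m) : N * exp (-(c * m)) ≤ δ := by
  rw [one_div_mul_eq_div, div_le_iff₀' hc] at h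
  have hN : N / δ ≤ exp (c * m) := (le_exp_log _).trans (exp_le_exp.2 h)
  rw [div_le_iff₀ hδ] at hN
  calc N * exp (-(c * m)) ≤ exp (c * m) * δ * exp (-(c * m)) := by gcongr
    _ = δ := by rw [mul_right_comm, ← exp_add, add_neg_cancel, exp_zero, one_mul]

theorem lt_chiP_add_of_le_chiHat {X : Type*} [MeasurableSpace X] {P : Measure X}
    {χ : (X → Bool) → X → ℝ} {m : ℕ} {s : Fin m → X} {h : X → Bool} {r ε : ℝ}
    (hhat : r ≤ chiHat χ m s h) (hsum : ∑ i, χ h (s i) < m * (chiP χ P h + ε)) :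
    r < chiP χ P h + ε := by
  rcases m.eq_zero_or_pos with rfl | hm
  · simp at hsum
  · have hm' : (0 : ℝ) < m := Nat.cast_pos.2 hm
    rw [chiHat, one_div_mul_eq_div, le_div_iff₀ hm'] at hhat
    exact lt_of_mul_lt_mul_left (by linarith) hm'.le

theorem stmt_9_general {X : Type*} [MeasurableSpace X] (P : Measure X)
    [IsProbabilityMeasure P] (cstar : X → Bool) (hc : Measurable cstar)
    (H : Finset (X → Bool)) (hHmeas : ∀ h ∈ H, Measurable h)
    (χ : (X → Bool) → X → ℝ) (hrange : ∀ h x, χ h x ∈ Set.Icc (0 : ℝ) 1)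
    (hχmeas : ∀ h ∈ H, Measurable (χ h))
    (t ε δ' δ'' : ℝ) (hε : ε ∈ Set.Ioo (0 : ℝ) 1)
    (hδ' : δ' ∈ Set.Ioo (0 : ℝ) 1) (hδ'' : δ'' ∈ Set.Ioo (0 : ℝ) 1)
    (mu ml : ℕ)
    (hmu : (1 / (2 * ε ^ 2)) * Real.log (2 * (H.card : ℝ) / δ') ≤ (mu : ℝ))
    (hml : (1 / ε) * Real.log
      (((H.filter fun h => 1 - t - 2 * ε ≤ chiP χ P h).card : ℝ) / δ'') ≤ (ml : ℝ)) :
    1 - δ' - δ'' ≤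
      (((Measure.pi fun _ : Fin mu => P).prod (Measure.pi fun _ : Fin ml => P))
        {ω : (Fin mu → X) × (Fin ml → X) |
          ∀ h ∈ H, (∀ i, h (ω.2 i) = cstar (ω.2 i)) →
            1 - t - ε ≤ chiHat χ mu ω.1 h → err P h cstar ≤ ε}).toReal := by
  set Hcompat := H.filter fun h => 1 - t - 2 * ε ≤ chiP χ P h
  set Hbad := Hcompat.filter fun h => ε < err P h cstar
  refine one_sub_sub_le_measureReal
    (A := {s | ∃ h ∈ H, mu * (chiP χ P h + ε) ≤ ∑ i, χ h (s i)} ×ˢ univ)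
    (B := univ ×ˢ {s | ∃ h ∈ Hbad, ∀ i, h (s i) = cstar (s i)}) ?_ ?_ ?_
  · rintro ω hω
    simp only [mem_compl_iff, mem_ofPred_eq, not_forall, not_le] at hω
    obtain ⟨h, hH, hlab, hhat, herr⟩ := hω
    by_cases hdev : mu * (chiP χ P h + ε) ≤ ∑ i, χ h (ω.1 i)
    · exact Or.inl ⟨⟨h, hH, hdev⟩, trivial⟩
    · have hcompat := lt_chiP_add_of_le_chiHat hhat (not_le.1 hdev)
      refine Or.inr ⟨trivial, h, ?_, hlab⟩
      simp only [Hbad, Hcompat, Finset.mem_filter]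
      exact ⟨⟨hH, by linarith⟩, herr⟩
  · rw [measureReal_prod_prod, probReal_univ, mul_one]
    have hsize := mul_exp_neg_le_of_one_div_mul_log_le (by positivity [hε.1]) hδ'.1 hmu
    calc _ ≤ H.card * exp (-(2 * ε ^ 2 * mu)) :=
          measureReal_exists_le_card_mul H _ fun h hh =>
            measureReal_pi_mul_integral_add_le_sum_le P (hχmeas h hh) (hrange h) mu hε.1.le
      _ ≤ δ' := by linarith [show 0 ≤ H.card * exp (-(2 * ε ^ 2 * mu)) by positivity]
  · rw [measureReal_prod_prod, probReal_univ, one_mul]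
    calc _ ≤ Hbad.card * exp (-(ε * ml)) := by
          refine measureReal_exists_le_card_mul Hbad _ fun h hh => ?_
          simp only [Hbad, Hcompat, Finset.mem_filter] at hh
          exact measureReal_pi_forall_eq_le P (hHmeas h hh.1.1) hc ml hh.2.le
      _ ≤ Hcompat.card * exp (-(ε * ml)) := by
          gcongr; exact Finset.filter_subset _ _
      _ ≤ δ'' := mul_exp_neg_le_of_one_div_mul_log_le hε.1 hδ''.1 hml

theorem stmt_9 {X : Type*} [MeasurableSpace X] (P : Measure X)
    [IsProbabilityMeasure P] (cstar : X → Bool) (hc : Measurable cstar)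
    (H : Finset (X → Bool)) (hHmeas : ∀ h ∈ H, Measurable h) (hcH : cstar ∈ H)
    (χ : (X → Bool) → X → ℝ) (hrange : ∀ h x, χ h x ∈ Set.Icc (0 : ℝ) 1)
    (hχmeas : ∀ h ∈ H, Measurable (χ h))
    (t ε δ' δ'' : ℝ) (ht : t ∈ Set.Ioo (0 : ℝ) 1) (hε : ε ∈ Set.Ioo (0 : ℝ) 1)
    (hδ' : δ' ∈ Set.Ioo (0 : ℝ) 1) (hδ'' : δ'' ∈ Set.Ioo (0 : ℝ) 1)
    (hcompat : 1 - t ≤ chiP χ P cstar)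
    (mu ml : ℕ)
    (hmu : (1 / (2 * ε ^ 2)) * Real.log (2 * (H.card : ℝ) / δ') ≤ (mu : ℝ))
    (hml : (1 / ε) * Real.log
      (((H.filter fun h => 1 - t - 2 * ε ≤ chiP χ P h).card : ℝ) / δ'') ≤ (ml : ℝ)) :
    1 - δ' - δ'' ≤
      (((Measure.pi fun _ : Fin mu => P).prod (Measure.pi fun _ : Fin ml => P))
        {ω : (Fin mu → X) × (Fin ml → X) |
          ∀ h ∈ H, (∀ i, h (ω.2 i) = cstar (ω.2 i)) →
            1 - t - ε ≤ chiHat χ mu ω.1 h → err P h cstar ≤ ε}).toReal :=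
  stmt_9_general P cstar hc H hHmeas χ hrange hχmeas t ε δ' δ'' hε hδ' hδ'' mu ml hmu hml
end
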